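/- arXiv:2202.07378 — 2 statements merged into one kernel-verified Lean document; each statement's English description precedes it below -/
import Mathlib

section
/- Let A be the coupling matrix A[n,l] = E[Σ^K(Θ)² p̄_{φ(n)}(Θ) p̄_{φ(l)}(Θ)] with orthonormal polynomials p̄_α. If the random variable Σ^K(Θ)² is bounded below by a constant c > 0 almost surely, then all eigenvalues of A are at least c; in particular A is positive definite and the stochastic Galerkin system is parabolic. -/
/-! By orthonormality, `x ⬝ᵥ A *ᵥ x = 𝔼[Σ² (∑ xₙ p̄_φ(n))²] ≥ c 𝔼[(∑ xₙ p̄_φ(n))²] = c ‖x‖²`,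
a Rayleigh-quotient bound that gives both the eigenvalue bound and positive definiteness. -/

open MeasureTheory Matrix

namespace Matrix

variable {n : Type*} [Fintype n]

theorem dotProduct_self_pos {R : Type*} [Ring R] [LinearOrder R] [IsStrictOrderedRing R]
    {v : n → R} (hv : v ≠ 0) : 0 < v ⬝ᵥ v :=
  (Finset.sum_nonneg fun i _ => mul_self_nonneg (v i)).lt_of_ne
    (Ne.symm (dotProduct_self_eq_zero.not.mpr hv))

theorem le_of_hasEigenvalue_of_coercive {R : Type*} [Field R] [LinearOrder R]
    [IsStrictOrderedRing R] [DecidableEq n] {A : Matrix n n R} {c t : R}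
    (hA : ∀ x, c * (x ⬝ᵥ x) ≤ x ⬝ᵥ A *ᵥ x) (ht : Module.End.HasEigenvalue (toLin' A) t) :
    c ≤ t := by
  obtain ⟨v, hv⟩ := ht.exists_hasEigenvector
  have hAv : A *ᵥ v = t • v := by simpa using hv.apply_eq_smul
  have hRayleigh := hA v
  rw [hAv, dotProduct_smul, smul_eq_mul] at hRayleigh
  exact le_of_mul_le_mul_right hRayleigh (dotProduct_self_pos hv.2)

theorem posDef_of_isSymm_of_coercive {A : Matrix n n ℝ} {c : ℝ} (hc : 0 < c) (hsymm : A.IsSymm)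
    (hA : ∀ x, c * (x ⬝ᵥ x) ≤ x ⬝ᵥ A *ᵥ x) : A.PosDef := by
  refine posDef_iff_dotProduct_mulVec.mpr ⟨isHermitian_iff_isSymm.mpr hsymm, fun x hx => ?_⟩
  simpa using (mul_pos hc (dotProduct_self_pos hx)).trans_le (hA x)

end Matrix

section WeightedGram

variable {Ω ι : Type*} [MeasurableSpace Ω] {μ : Measure Ω} {w : Ω → ℝ}
  {f : ι → Ω → ℝ}

noncomputable def weightedGram (μ : Measure Ω) (w : Ω → ℝ) (f : ι → Ω → ℝ) : Matrix ι ι ℝ :=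
  Matrix.of fun i j => ∫ ω, w ω * f i ω * f j ω ∂μ

theorem weightedGram_isSymm : (weightedGram μ w f).IsSymm :=
  Matrix.IsSymm.ext fun i j => integral_congr_ae <| .of_forall fun ω => by ring

lemma mul_sum_mul_sq [Fintype ι] (a : ℝ) (x y : ι → ℝ) :
    a * (∑ i, x i * y i) ^ 2 = ∑ i, ∑ j, x i * x j * (a * y i * y j) := by
  rw [sq, Finset.sum_mul_sum, Finset.mul_sum]
  exact Finset.sum_congr rfl fun i _ => by
    rw [Finset.mul_sum]
    exact Finset.sum_congr rfl fun j _ => by ring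

theorem integrable_mul_sum_sq [Fintype ι]
    (hint : ∀ i j, Integrable (fun ω => w ω * f i ω * f j ω) μ) (x : ι → ℝ) :
    Integrable (fun ω => w ω * (∑ i, x i * f i ω) ^ 2) μ := by
  simp_rw [mul_sum_mul_sq]
  exact integrable_finsetSum _ fun i _ => integrable_finsetSum _ fun j _ =>
    (hint i j).const_mul _

theorem dotProduct_weightedGram_mulVec [Fintype ι]
    (hint : ∀ i j, Integrable (fun ω => w ω * f i ω * f j ω) μ) (x : ι → ℝ) :
    x ⬝ᵥ weightedGram μ w f *ᵥ x = ∫ ω, w ω * (∑ i, x i * f i ω) ^ 2 ∂μ := by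
  simp_rw [mul_sum_mul_sq]
  rw [integral_finsetSum _ fun i _ => integrable_finsetSum _ fun j _ => (hint i j).const_mul _]
  simp_rw [integral_finsetSum _ fun j _ => (hint _ j).const_mul _, integral_const_mul,
    dotProduct, mulVec, dotProduct, Finset.mul_sum]
  exact Finset.sum_congr rfl fun i _ => Finset.sum_congr rfl fun j _ => by
    simp only [weightedGram, of_apply]; ring

theorem weightedGram_one_of_orthonormal [DecidableEq ι]
    (horth : ∀ i j, ∫ ω, f i ω * f j ω ∂μ = if i = j then 1 else 0) :
    weightedGram μ 1 f = 1 :=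
  Matrix.ext fun i j => by simpa [weightedGram, one_apply] using horth i j

theorem weightedGram_coercive [Fintype ι] [DecidableEq ι] {c : ℝ}
    (horth : ∀ i j, ∫ ω, f i ω * f j ω ∂μ = if i = j then 1 else 0)
    (hint₁ : ∀ i j, Integrable (fun ω => f i ω * f j ω) μ)
    (hint : ∀ i j, Integrable (fun ω => w ω * f i ω * f j ω) μ) (hw : ∀ᵐ ω ∂μ, c ≤ w ω)
    (x : ι → ℝ) : c * (x ⬝ᵥ x) ≤ x ⬝ᵥ weightedGram μ w f *ᵥ x := by
  have hint₁' : ∀ i j, Integrable (fun ω => (1 : Ω → ℝ) ω * f i ω * f j ω) μ := by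
    simpa using hint₁
  have hnorm := dotProduct_weightedGram_mulVec hint₁' x
  rw [weightedGram_one_of_orthonormal horth, one_mulVec] at hnorm
  rw [hnorm, dotProduct_weightedGram_mulVec hint, ← integral_const_mul]
  refine integral_mono_ae ((integrable_mul_sum_sq hint₁' x).const_mul c)
    (integrable_mul_sum_sq hint x) ?_
  filter_upwards [hw] with ω hω
  simpa using mul_le_mul_of_nonneg_right hω (sq_nonneg (∑ i, x i * f i ω))

end WeightedGram

theorem stmt7_general (L : ℕ) {Ω : Type*} [MeasurableSpace Ω] (μ : Measure Ω)
    (Θ : Ω → (Fin L → ℝ)) (p : (Fin L → ℕ) → (Fin L → ℝ) → ℝ)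
    (honb : ∀ α β : Fin L → ℕ,
      ∫ ω, p α (Θ ω) * p β (Θ ω) ∂μ = if α = β then 1 else 0)
    (hintp : ∀ α β : Fin L → ℕ, Integrable (fun ω => p α (Θ ω) * p β (Θ ω)) μ)
    (m : ℕ) (φ : Fin m → (Fin L → ℕ)) (hφ : Function.Injective φ)
    (SigK : Ω → ℝ)
    (A : Matrix (Fin m) (Fin m) ℝ)
    (hA : ∀ n l, A n l = ∫ ω, (SigK ω) ^ 2 * p (φ n) (Θ ω) * p (φ l) (Θ ω) ∂μ)
    (hint : ∀ n l, Integrable (fun ω => (SigK ω) ^ 2 * p (φ n) (Θ ω) * p (φ l) (Θ ω)) μ)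
    (c : ℝ) (hc : 0 < c) (hbound : ∀ᵐ ω ∂μ, c ≤ (SigK ω) ^ 2) :
    (∀ t : ℝ, Module.End.HasEigenvalue (Matrix.toLin' A) t → c ≤ t) ∧ A.PosDef := by
  set f : Fin m → Ω → ℝ := fun n ω => p (φ n) (Θ ω)
  have hgram : A = weightedGram μ (fun ω => SigK ω ^ 2) f := Matrix.ext hA
  have horth : ∀ n l, ∫ ω, f n ω * f l ω ∂μ = if n = l then 1 else 0 := fun n l => by
    simp only [f, honb, hφ.eq_iff]
  have hcoer := weightedGram_coercive horth (fun n l => hintp _ _) hint hbound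
  rw [← hgram] at hcoer
  exact ⟨fun t => le_of_hasEigenvalue_of_coercive hcoer,
    posDef_of_isSymm_of_coercive hc (hgram ▸ weightedGram_isSymm) hcoer⟩

theorem stmt7 (L K : ℕ) {Ω : Type*} [MeasurableSpace Ω] (μ : Measure Ω) [IsProbabilityMeasure μ]
    (Θ : Ω → (Fin L → ℝ)) (p : (Fin L → ℕ) → (Fin L → ℝ) → ℝ)
    (honb : ∀ α β : Fin L → ℕ,
      ∫ ω, p α (Θ ω) * p β (Θ ω) ∂μ = if α = β then 1 else 0)
    (hintp : ∀ α β : Fin L → ℕ, Integrable (fun ω => p α (Θ ω) * p β (Θ ω)) μ)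
    (σ : (Fin L → ℕ) → ℝ) (m : ℕ) (φ : Fin m → (Fin L → ℕ)) (hφ : Function.Injective φ)
    (SigK : Ω → ℝ)
    (hSigK : ∀ ω, SigK ω = ∑ α ∈ (Fintype.piFinset fun _ : Fin L => Finset.range (K + 1)).filter
        (fun α => ∑ i, α i ≤ K), σ α * p α (Θ ω))
    (A : Matrix (Fin m) (Fin m) ℝ)
    (hA : ∀ n l, A n l = ∫ ω, (SigK ω) ^ 2 * p (φ n) (Θ ω) * p (φ l) (Θ ω) ∂μ)
    (hint : ∀ n l, Integrable (fun ω => (SigK ω) ^ 2 * p (φ n) (Θ ω) * p (φ l) (Θ ω)) μ)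
    (c : ℝ) (hc : 0 < c) (hbound : ∀ᵐ ω ∂μ, c ≤ (SigK ω) ^ 2) :
    (∀ t : ℝ, Module.End.HasEigenvalue (Matrix.toLin' A) t → c ≤ t) ∧ A.PosDef :=
  stmt7_general L μ Θ p honb hintp m φ hφ SigK A hA hint c hc hbound
end

section
/- For each fixed volatility σ > 0, interest rate r, strike E > 0 and maturity T, the function V(S,t) = S·N(d₁) − E·e^{−r(T−t)}·N(d₂) with d₁ = (ln(S/E) + (r + σ²/2)(T−t))/(σ√(T−t)), d₂ = d₁ − σ√(T−t) and N the standard normal CDF, satisfies the Black Scholes PDE ∂_t V + (1/2)σ²S² ∂_S² V + rS ∂_S V − rV = 0 for S > 0 and t < T. -/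
/-!
Write `d₂ = d₁ - σ√(T - t)` and `K = E e^{-r(T - t)}`, so that `V = S N(d₁) - K N(d₂)`.
Completing the square gives `S φ(d₁) = K φ(d₂)` for the Gaussian density `φ = N'`. Hence,
when `V` is differentiated, the terms through `φ(d₁) ∂d₁` and `φ(d₂) ∂d₂` cancel except for
`S φ(d₁) ∂(d₁ - d₂)`, which gives the Greeks `∂_S V = N(d₁)`,
`∂_S² V = φ(d₁) / (S σ √(T - t))` and `∂_t V = -S φ(d₁) σ / (2√(T - t)) - r K N(d₂)`;
with these the PDE is a linear identity.
-/

noncomputable def normalCDF (x : ℝ) : ℝ :=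
  (Real.sqrt (2 * Real.pi))⁻¹ * ∫ u in Set.Iic x, Real.exp (-u ^ 2 / 2)

noncomputable def bsCall (σ r Ek T : ℝ) (S t : ℝ) : ℝ :=
  S * normalCDF ((Real.log (S / Ek) + (r + σ ^ 2 / 2) * (T - t)) / (σ * Real.sqrt (T - t)))
    - Ek * Real.exp (-r * (T - t)) *
      normalCDF ((Real.log (S / Ek) + (r + σ ^ 2 / 2) * (T - t)) / (σ * Real.sqrt (T - t))
        - σ * Real.sqrt (T - t))

open MeasureTheory Real Set

noncomputable def normalPDF (x : ℝ) : ℝ := (√(2 * π))⁻¹ * exp (-x ^ 2 / 2)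

theorem hasDerivAt_integral_Iic {f : ℝ → ℝ} (hf : Integrable f) (hc : Continuous f) (x : ℝ) :
    HasDerivAt (fun y => ∫ u in Iic y, f u) (f x) x := by
  have hsplit : (fun y => ∫ u in Iic y, f u)
      = fun y => (∫ u in Iic 0, f u) + ∫ u in (0 : ℝ)..y, f u := by
    funext y
    rw [← intervalIntegral.integral_Iic_sub_Iic hf.integrableOn hf.integrableOn]
    ring
  rw [hsplit]
  exact (intervalIntegral.integral_hasDerivAt_right hf.intervalIntegrable
    (hc.stronglyMeasurableAtFilter _ _) hc.continuousAt).const_add _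

theorem hasDerivAt_normalCDF (x : ℝ) : HasDerivAt normalCDF (normalPDF x) x := by
  have hint : Integrable fun u : ℝ => exp (-u ^ 2 / 2) := by
    convert integrable_exp_neg_mul_sq (b := 1 / 2) (by norm_num) using 2 with u
    ring_nf
  exact (hasDerivAt_integral_Iic hint (by fun_prop) x).const_mul _

theorem HasDerivAt.normalCDF {f : ℝ → ℝ} {f' x : ℝ} (hf : HasDerivAt f f' x) :
    HasDerivAt (fun y => normalCDF (f y)) (normalPDF (f x) * f') x :=
  (hasDerivAt_normalCDF (f x)).comp x hf

theorem mul_normalPDF_eq_mul_normalPDF_sub {S K d s : ℝ} (hS : 0 < S) (hK : 0 < K)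
    (hd : d * s = log (S / K) + s ^ 2 / 2) :
    S * normalPDF d = K * normalPDF (d - s) := by
  have hexp : S * exp (-d ^ 2 / 2) = K * exp (-(d - s) ^ 2 / 2) :=
    calc S * exp (-d ^ 2 / 2) = K * exp (log (S / K)) * exp (-d ^ 2 / 2) := by
          rw [exp_log (div_pos hS hK)]
          field_simp
      _ = K * exp (-(d - s) ^ 2 / 2) := by
          rw [mul_assoc, ← exp_add]
          congr 2
          linear_combination -hd
  unfold normalPDF
  linear_combination (√(2 * π))⁻¹ * hexp

theorem hasDerivAt_mul_normalCDF_sub_mul_normalCDF {f K d s : ℝ → ℝ} {f' K' d' s' x : ℝ}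
    (hf : HasDerivAt f f' x) (hK : HasDerivAt K K' x) (hd : HasDerivAt d d' x)
    (hs : HasDerivAt s s' x) (hpdf : f x * normalPDF (d x) = K x * normalPDF (d x - s x)) :
    HasDerivAt (fun y => f y * normalCDF (d y) - K y * normalCDF (d y - s y))
      (f' * normalCDF (d x) - K' * normalCDF (d x - s x) + f x * normalPDF (d x) * s') x :=
  ((hf.mul hd.normalCDF).sub (hK.mul (hd.fun_sub hs).normalCDF)).congr_deriv
    (by linear_combination (d' - s') * hpdf)

section BlackScholes

variable (σ r Ek T : ℝ)

noncomputable def bsD1 (S t : ℝ) : ℝ :=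
  (log (S / Ek) + (r + σ ^ 2 / 2) * (T - t)) / (σ * √(T - t))

theorem bsCall_eq (S t : ℝ) :
    bsCall σ r Ek T S t = S * normalCDF (bsD1 σ r Ek T S t)
      - Ek * exp (-r * (T - t)) * normalCDF (bsD1 σ r Ek T S t - σ * √(T - t)) :=
  rfl

variable {σ r Ek T}

theorem mul_normalPDF_bsD1 (hσ : 0 < σ) (hE : 0 < Ek) {S t : ℝ} (hS : 0 < S) (ht : t < T) :
    S * normalPDF (bsD1 σ r Ek T S t)
      = Ek * exp (-r * (T - t)) * normalPDF (bsD1 σ r Ek T S t - σ * √(T - t)) := by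
  have hτ : 0 < T - t := sub_pos.2 ht
  refine mul_normalPDF_eq_mul_normalPDF_sub hS (by positivity) ?_
  rw [bsD1, div_mul_cancel₀ _ (by positivity), mul_pow, sq_sqrt hτ.le,
    div_mul_eq_div_div, log_div (div_pos hS hE).ne' (exp_pos _).ne', log_exp]
  ring

theorem hasDerivAt_bsD1_S (hE : Ek ≠ 0) {S : ℝ} (t : ℝ) (hS : S ≠ 0) :
    HasDerivAt (fun S' => bsD1 σ r Ek T S' t) (1 / (S * (σ * √(T - t)))) S := by
  have hlog : HasDerivAt (fun S' => log (S' / Ek)) (1 / S) S := by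
    convert ((hasDerivAt_id' S).div_const Ek).log (div_ne_zero hS hE) using 1
    field_simp
  exact ((hlog.add_const _).div_const _).congr_deriv (div_div _ _ _)

theorem differentiableAt_bsD1_t (hσ : 0 < σ) {S t : ℝ} (ht : t < T) :
    DifferentiableAt ℝ (fun t' => bsD1 σ r Ek T S t') t := by
  have hτ : T - t ≠ 0 := (sub_pos.2 ht).ne'
  have hστ : σ * √(T - t) ≠ 0 := by positivity
  unfold bsD1
  fun_prop (disch := assumption)

theorem hasDerivAt_bsCall_S (hσ : 0 < σ) (hE : 0 < Ek) {S t : ℝ} (hS : 0 < S) (ht : t < T) :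
    HasDerivAt (fun S' => bsCall σ r Ek T S' t) (normalCDF (bsD1 σ r Ek T S t)) S :=
  (hasDerivAt_mul_normalCDF_sub_mul_normalCDF (hasDerivAt_id' S) (hasDerivAt_const S _)
    (hasDerivAt_bsD1_S hE.ne' t hS.ne') (hasDerivAt_const S _)
    (mul_normalPDF_bsD1 hσ hE hS ht)).congr_deriv (by ring)

theorem hasDerivAt_bsCall_t (hσ : 0 < σ) (hE : 0 < Ek) {S t : ℝ} (hS : 0 < S) (ht : t < T) :
    HasDerivAt (fun t' => bsCall σ r Ek T S t')
      (-(S * normalPDF (bsD1 σ r Ek T S t) * σ / (2 * √(T - t)))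
        - r * (Ek * exp (-r * (T - t))) * normalCDF (bsD1 σ r Ek T S t - σ * √(T - t))) t := by
  have hτ : 0 < T - t := sub_pos.2 ht
  have hT : HasDerivAt (fun t' => T - t') (-1) t := by
    simpa using (hasDerivAt_id t).const_sub T
  have hK := ((hT.const_mul (-r)).exp).const_mul Ek
  have hs := (hT.sqrt hτ.ne').const_mul σ
  exact (hasDerivAt_mul_normalCDF_sub_mul_normalCDF (hasDerivAt_const t S) hK
    (differentiableAt_bsD1_t hσ ht).hasDerivAt hs (mul_normalPDF_bsD1 hσ hE hS ht)).congr_deriv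
    (by ring)

theorem iteratedDeriv_two_bsCall_S (hσ : 0 < σ) (hE : 0 < Ek) {S t : ℝ} (hS : 0 < S)
    (ht : t < T) :
    iteratedDeriv 2 (fun S' => bsCall σ r Ek T S' t) S
      = normalPDF (bsD1 σ r Ek T S t) / (S * (σ * √(T - t))) := by
  have hdelta : deriv (fun S' => bsCall σ r Ek T S' t) =ᶠ[nhds S]
      fun S' => normalCDF (bsD1 σ r Ek T S' t) := by
    filter_upwards [eventually_gt_nhds hS] with S' hS'
    exact (hasDerivAt_bsCall_S hσ hE hS' ht).deriv
  rw [iteratedDeriv_succ, iteratedDeriv_one, hdelta.deriv_eq,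
    (hasDerivAt_bsD1_S hE.ne' t hS.ne').normalCDF.deriv]
  ring

end BlackScholes

theorem stmt11 (σ r Ek T : ℝ) (hσ : 0 < σ) (hE : 0 < Ek) (S t : ℝ) (hS : 0 < S) (ht : t < T) :
    deriv (fun t' => bsCall σ r Ek T S t') t
      + 1 / 2 * σ ^ 2 * S ^ 2 * iteratedDeriv 2 (fun S' => bsCall σ r Ek T S' t) S
      + r * S * deriv (fun S' => bsCall σ r Ek T S' t) S
      - r * bsCall σ r Ek T S t = 0 := by
  have hτ : 0 < √(T - t) := sqrt_pos.2 (sub_pos.2 ht)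
  rw [(hasDerivAt_bsCall_t hσ hE hS ht).deriv, iteratedDeriv_two_bsCall_S hσ hE hS ht,
    (hasDerivAt_bsCall_S hσ hE hS ht).deriv, bsCall_eq]
  field_simp
  ring
end
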